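/- Let L = [[m, A*],[A, −m]] with m > 0 and A closed densely defined. If m is an eigenvalue of L, then 0 is an eigenvalue of A*A; conversely, if 0 is an eigenvalue of A*A then m is an eigenvalue of L. -/

import Mathlib

open ContinuousLinearMap in
/-- For `m > 0`, `m` is an eigenvalue of `L = [[m,A*],[A,−m]]` iff `0` is an eigenvalue
of `A*A`. -/
theorem eigenvalue_m_iff_kernel_AstarA
    {H₁ H₂ : Type*} [NormedAddCommGroup H₁] [InnerProductSpace ℂ H₁] [CompleteSpace H₁]
    [NormedAddCommGroup H₂] [InnerProductSpace ℂ H₂] [CompleteSpace H₂]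
    (A : H₁ →L[ℂ] H₂) (m : ℝ) (hm : 0 < m)
    (L : (H₁ × H₂) →L[ℂ] (H₁ × H₂))
    (hL : L = ((m : ℂ) • fst ℂ H₁ H₂ + (adjoint A).comp (snd ℂ H₁ H₂)).prod
        (A.comp (fst ℂ H₁ H₂) - (m : ℂ) • snd ℂ H₁ H₂)) :
    (∃ v : H₁ × H₂, v ≠ 0 ∧ L v = (m : ℂ) • v) ↔
      (∃ φ : H₁, φ ≠ 0 ∧ ((adjoint A).comp A) φ = 0) := by
  subst hL
  constructor
  · rintro ⟨⟨x, y⟩, hv, hLv⟩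
    have h1 : (m : ℂ) • x + adjoint A y = (m : ℂ) • x := congrArg Prod.fst hLv
    have h2 : A x - (m : ℂ) • y = (m : ℂ) • y := congrArg Prod.snd hLv
    have hAy : adjoint A y = 0 := add_eq_left.mp h1
    have hAx : A x = (2 * m : ℂ) • y := by
      rw [sub_eq_iff_eq_add.mp h2, ← add_smul]
      module
    have hx : x ≠ 0 := by
      rintro rfl
      apply hv
      have : ((2 * m : ℂ)) • y = 0 := by simpa using hAx.symm
      have hy : y = 0 := by
        rcases smul_eq_zero.mp this with h | h
        · exact absurd h (by
            simp only [ne_eq, mul_eq_zero, Complex.ofReal_eq_zero]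
            push_neg
            exact ⟨two_ne_zero, hm.ne'⟩)
        · exact h
      simp [hy]
    refine ⟨x, hx, ?_⟩
    simp only [comp_apply]
    rw [hAx, map_smul, hAy, smul_zero]
  · rintro ⟨φ, hφ, hAAφ⟩
    have hAφ : A φ = 0 := by
      have h : (inner ℂ (A φ) (A φ) : ℂ) = 0 := by
        rw [← ContinuousLinearMap.adjoint_inner_left]
        simp only [comp_apply] at hAAφ
        rw [hAAφ, inner_zero_left]
      exact inner_self_eq_zero.mp h
    refine ⟨(φ, 0), by simp [hφ], ?_⟩
    simp [hAφ, Prod.smul_mk]
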